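/- arXiv:1102.1192 — 4 statements merged into one kernel-verified Lean document; each statement's English description precedes it below -/
import Mathlib

section
/- Fix 6 < q < 12 and define K*_q(α, β) = (α + β)^{-6/q} · (α²β² + (α+β)²)^{-3/4 + 3/q} for α, β > 0. Then ∫₀^∞ ∫₀^∞ K*_q(α, β) dα dβ < ∞. -/
/-!
Write `K = (α+β)^a (α²β² + (α+β)²)^b` with `a = -6/q`, `b = -3/4 + 3/q`, both `≤ 0`.
Dropping `α²β²` gives `K ≤ (α+β)^{a+2b} = (α+β)^{-3/2}`, which controls `K` when one variable is
at most `1`; dropping `(α+β)²` gives `K ≤ (αβ)^{a/2+2b} = (αβ)^{3/q-3/2}` when both are large.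
Together `K(α,β) ≤ w(α) w(β)` with `w(x) = min (x^{-3/4}, x^{3/q-3/2})`, and `w` is integrable on
`(0,∞)` exactly because `3/q - 3/2 < -1`, i.e. `q > 6`.
-/

open Set MeasureTheory

/-- With `a = -6/q` and `b = -3/4 + 3/q` this is the paper's kernel `K*_q`. -/
noncomputable def duhamelKernel (a b x y : ℝ) : ℝ :=
  (x + y) ^ a * (x ^ 2 * y ^ 2 + (x + y) ^ 2) ^ b

lemma rpow_add_le_rpow_half_mul_rpow_half {x y r : ℝ} (hx : 0 < x) (hy : 0 < y) (hr : r ≤ 0) :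
    (x + y) ^ r ≤ x ^ (r / 2) * y ^ (r / 2) := by
  have hxy : x * y ≤ (x + y) ^ 2 := by nlinarith [sq_nonneg (x - y)]
  calc (x + y) ^ r = ((x + y) ^ 2) ^ (r / 2) := by
        rw [← Real.rpow_natCast, ← Real.rpow_mul (by positivity)]; ring_nf
    _ ≤ (x * y) ^ (r / 2) := Real.rpow_le_rpow_of_nonpos (by positivity) hxy (by linarith)
    _ = x ^ (r / 2) * y ^ (r / 2) := Real.mul_rpow hx.le hy.le

lemma integrableOn_Ioi_min_rpow {r c : ℝ} (hr : -1 < r) (hc : c < -1) :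
    IntegrableOn (fun x : ℝ => min (x ^ r) (x ^ c)) (Ioi 0) := by
  have hmeas : AEStronglyMeasurable (fun x : ℝ => min (x ^ r) (x ^ c)) :=
    (by fun_prop : Measurable fun x : ℝ => min (x ^ r) (x ^ c)).aestronglyMeasurable
  have hnorm (x : ℝ) (hx : 0 < x) : ‖min (x ^ r) (x ^ c)‖ = min (x ^ r) (x ^ c) :=
    Real.norm_of_nonneg (le_min (by positivity) (by positivity))
  rw [← Ioc_union_Ioi_eq_Ioi zero_le_one]
  refine IntegrableOn.union ?_ ?_
  · refine (intervalIntegral.intervalIntegrable_rpow' hr).1.mono' hmeas.restrict ?_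
    filter_upwards [ae_restrict_mem measurableSet_Ioc] with x hx
    exact (hnorm x hx.1).trans_le (min_le_left _ _)
  · refine (integrableOn_Ioi_rpow_of_lt hc zero_lt_one).mono' hmeas.restrict ?_
    filter_upwards [ae_restrict_mem measurableSet_Ioi] with x hx
    exact (hnorm x (zero_lt_one.trans hx)).trans_le (min_le_right _ _)

namespace duhamelKernel

variable {a b x y : ℝ}

lemma comm (a b x y : ℝ) : duhamelKernel a b x y = duhamelKernel a b y x := by
  unfold duhamelKernel
  rw [add_comm y x, mul_comm (y ^ 2)]

lemma nonneg (hx : 0 ≤ x) (hy : 0 ≤ y) : 0 ≤ duhamelKernel a b x y := by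
  unfold duhamelKernel
  positivity

lemma le_rpow_add (hx : 0 < x) (hy : 0 < y) (hb : b ≤ 0) :
    duhamelKernel a b x y ≤ (x + y) ^ (a + 2 * b) := by
  have hs : 0 < x + y := by positivity
  calc duhamelKernel a b x y ≤ (x + y) ^ a * ((x + y) ^ 2) ^ b :=
        mul_le_mul_of_nonneg_left
          (Real.rpow_le_rpow_of_nonpos (by positivity) (le_add_of_nonneg_left (by positivity)) hb)
          (by positivity)
    _ = (x + y) ^ (a + 2 * b) := by
        rw [← Real.rpow_natCast, ← Real.rpow_mul hs.le, ← Real.rpow_add hs]; norm_num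

lemma le_rpow_mul_rpow (hx : 0 < x) (hy : 0 < y) (ha : a ≤ 0) (hb : b ≤ 0) :
    duhamelKernel a b x y ≤ x ^ (a / 2 + 2 * b) * y ^ (a / 2 + 2 * b) := by
  have hxy : (x * y) ^ 2 ≤ x ^ 2 * y ^ 2 + (x + y) ^ 2 := by
    rw [mul_pow]; exact le_add_of_nonneg_right (by positivity)
  calc duhamelKernel a b x y ≤ (x ^ (a / 2) * y ^ (a / 2)) * ((x * y) ^ 2) ^ b :=
        mul_le_mul (rpow_add_le_rpow_half_mul_rpow_half hx hy ha)
          (Real.rpow_le_rpow_of_nonpos (by positivity) hxy hb) (by positivity) (by positivity)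
    _ = x ^ (a / 2 + 2 * b) * y ^ (a / 2 + 2 * b) := by
        rw [← Real.rpow_natCast, ← Real.rpow_mul (by positivity), Real.mul_rpow hx.le hy.le,
          Real.rpow_add hx, Real.rpow_add hy]
        ring_nf

lemma le_min_rpow_mul_min_rpow (hx : 0 < x) (hy : 0 < y) (ha : a ≤ 0) (hb : b ≤ 0) :
    duhamelKernel a b x y ≤
      min (x ^ ((a + 2 * b) / 2)) (x ^ (a / 2 + 2 * b)) *
        min (y ^ ((a + 2 * b) / 2)) (y ^ (a / 2 + 2 * b)) := by
  wlog hxy : x ≤ y generalizing x y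
  · rw [comm, mul_comm]
    exact this hy hx (le_of_not_ge hxy)
  have hcr : a / 2 + 2 * b ≤ (a + 2 * b) / 2 := by linarith
  rcases le_or_gt y 1 with hy1 | hy1
  · rw [min_eq_left (Real.rpow_le_rpow_of_exponent_ge hx (hxy.trans hy1) hcr),
      min_eq_left (Real.rpow_le_rpow_of_exponent_ge hy hy1 hcr)]
    exact (le_rpow_add hx hy hb).trans
      (rpow_add_le_rpow_half_mul_rpow_half hx hy (by linarith))
  rw [min_eq_right (Real.rpow_le_rpow_of_exponent_le hy1.le hcr)]
  rcases le_or_gt x 1 with hx1 | hx1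
  · rw [min_eq_left (Real.rpow_le_rpow_of_exponent_ge hx hx1 hcr)]
    calc duhamelKernel a b x y ≤ (x + y) ^ (a + 2 * b) := le_rpow_add hx hy hb
      _ ≤ y ^ (a + 2 * b) := Real.rpow_le_rpow_of_nonpos hy (by linarith) (by linarith)
      _ ≤ y ^ (a / 2 + 2 * b) := Real.rpow_le_rpow_of_exponent_le hy1.le (by linarith)
      _ ≤ x ^ ((a + 2 * b) / 2) * y ^ (a / 2 + 2 * b) :=
        le_mul_of_one_le_left (by positivity)
          (Real.one_le_rpow_of_pos_of_le_one_of_nonpos hx hx1 (by linarith))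
  · rw [min_eq_right (Real.rpow_le_rpow_of_exponent_le hx1.le hcr)]
    exact le_rpow_mul_rpow hx hy ha hb

theorem integrableOn_Ioi_prod_Ioi (ha : a ≤ 0) (hb : b ≤ 0) (hs : -2 < a + 2 * b)
    (hc : a / 2 + 2 * b < -1) :
    IntegrableOn (fun p : ℝ × ℝ => duhamelKernel a b p.1 p.2) (Ioi 0 ×ˢ Ioi 0) := by
  have hw := integrableOn_Ioi_min_rpow (r := (a + 2 * b) / 2) (by linarith) hc
  have hprod : IntegrableOn (fun p : ℝ × ℝ =>
      min (p.1 ^ ((a + 2 * b) / 2)) (p.1 ^ (a / 2 + 2 * b)) *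
        min (p.2 ^ ((a + 2 * b) / 2)) (p.2 ^ (a / 2 + 2 * b))) (Ioi 0 ×ˢ Ioi 0) := by
    rw [IntegrableOn, Measure.volume_eq_prod, ← Measure.prod_restrict]
    exact hw.mul_prod hw
  have hmeas : Measurable fun p : ℝ × ℝ => duhamelKernel a b p.1 p.2 := by
    unfold duhamelKernel; fun_prop
  refine hprod.mono' hmeas.aestronglyMeasurable.restrict ?_
  filter_upwards [ae_restrict_mem (measurableSet_Ioi.prod measurableSet_Ioi)] with p ⟨hx, hy⟩
  rw [Real.norm_of_nonneg (nonneg hx.le hy.le)]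
  exact le_min_rpow_mul_min_rpow hx hy ha hb

end duhamelKernel

theorem stmt3_general (q : ℝ) (hq1 : 6 < q) :
    IntegrableOn
      (fun p : ℝ × ℝ =>
        (p.1 + p.2) ^ (-6 / q : ℝ) *
          (p.1 ^ 2 * p.2 ^ 2 + (p.1 + p.2) ^ 2) ^ (-3 / 4 + 3 / q : ℝ))
      (Ioi (0 : ℝ) ×ˢ Ioi (0 : ℝ)) := by
  have hq : 0 < q := by linarith
  have h3q : 3 / q < 1 / 2 := by rw [div_lt_iff₀ hq]; linarith
  have h6q : 0 < 6 / q := by positivity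
  have hsum : -6 / q + 2 * (-3 / 4 + 3 / q) = -3 / 2 := by field_simp; ring
  refine duhamelKernel.integrableOn_Ioi_prod_Ioi ?_ (by linarith) (by linarith) ?_
  · rw [neg_div]; linarith
  · have : -6 / q / 2 + 2 * (-3 / 4 + 3 / q) = 3 / q - 3 / 2 := by field_simp; ring
    linarith

/-- For `6 < q < 12`, the kernel
`K*_q(α,β) = (α+β)^{-6/q} (α²β² + (α+β)²)^{-3/4+3/q}` is integrable over the
quadrant `(0,∞)²`. -/
theorem stmt3 (q : ℝ) (hq1 : 6 < q) (hq2 : q < 12) :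
    IntegrableOn
      (fun p : ℝ × ℝ =>
        (p.1 + p.2) ^ (-6 / q : ℝ) *
          (p.1 ^ 2 * p.2 ^ 2 + (p.1 + p.2) ^ 2) ^ (-3 / 4 + 3 / q : ℝ))
      (Ioi (0 : ℝ) ×ˢ Ioi (0 : ℝ)) :=
  stmt3_general q hq1
end

section
/- Let 6 < q < 12. Then there is a constant C_q such that ∫₀^{π/2} (r⁴ sin²(2θ) + r²)^{-3/4 + 3/q} dθ ≤ C_q r^{-3/2 + 6/q} (1 + r)^{3/2 - 6/q - 1} for all r ≥ 1, and ∫₀^{π/2} (r⁴ sin²(2θ) + r²)^{-3/4 + 3/q} dθ ≤ C_q r^{-3/2 + 6/q} for 0 < r ≤ 1. -/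
set_option maxHeartbeats 1000000

open Real

/-- Angular integral estimate for the double-Duhamel kernel: for `6 < q < 12`
there is `C_q` with
`∫₀^{π/2} (r⁴ sin²(2θ) + r²)^{-3/4+3/q} dθ ≤ C_q r^{-3/2+6/q} (1+r)^{3/2-6/q-1}`
for `r ≥ 1`, and `≤ C_q r^{-3/2+6/q}` for `0 < r ≤ 1`. -/
theorem stmt4 (q : ℝ) (hq1 : 6 < q) (hq2 : q < 12) :
    ∃ C > 0,
      (∀ r : ℝ, 1 ≤ r →
        (∫ θ in (0 : ℝ)..(π / 2),
            (r ^ 4 * Real.sin (2 * θ) ^ 2 + r ^ 2) ^ (-3 / 4 + 3 / q : ℝ))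
          ≤ C * r ^ (-3 / 2 + 6 / q : ℝ) * (1 + r) ^ (3 / 2 - 6 / q - 1 : ℝ)) ∧
      (∀ r : ℝ, 0 < r → r ≤ 1 →
        (∫ θ in (0 : ℝ)..(π / 2),
            (r ^ 4 * Real.sin (2 * θ) ^ 2 + r ^ 2) ^ (-3 / 4 + 3 / q : ℝ))
          ≤ C * r ^ (-3 / 2 + 6 / q : ℝ)) := by
  have hq0 : (0 : ℝ) < q := by linarith
  set α : ℝ := -3 / 4 + 3 / q with hα
  have hα_neg : α < 0 := by
    have : 3 / q < 1 / 2 := by rw [div_lt_div_iff₀ hq0 (by norm_num)]; linarith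
    simp only [hα]; linarith
  have h2α : -1 < 2 * α := by
    have : 1 / 4 < 3 / q := by rw [div_lt_div_iff₀ (by norm_num) hq0]; linarith
    simp only [hα]; linarith
  have h4α : 4 * α ≤ -1 := by
    have : 3 / q < 1 / 2 := by rw [div_lt_div_iff₀ hq0 (by norm_num)]; linarith
    simp only [hα]; linarith
  have hπ : (0 : ℝ) < π := pi_pos
  set β : ℝ := 3 / 2 - 6 / q - 1 with hβ
  have hβ_eq : β = -(2 * α) - 1 := by simp only [hβ, hα]; ring
  have hβ_neg : β ≤ 0 := by rw [hβ_eq]; linarith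
  -- the constant pieces
  set D : ℝ := ((4 / π) ^ (2 : ℕ) : ℝ) ^ α with hD
  have hD_pos : 0 < D := by
    apply rpow_pos_of_pos; positivity
  set J : ℝ := ∫ θ in (0 : ℝ)..(π / 4), θ ^ (2 * α) with hJ
  have hJ_nonneg : 0 ≤ J := by
    apply intervalIntegral.integral_nonneg (by positivity)
    intro x hx
    exact Real.rpow_nonneg hx.1 _
  set C : ℝ := π / 2 + 2 * D * J * (2 : ℝ) ^ (-β) with hC
  have hCJ : (0:ℝ) ≤ 2 * D * J * (2 : ℝ) ^ (-β) :=
    mul_nonneg (mul_nonneg (by positivity) hJ_nonneg)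
      (rpow_pos_of_pos two_pos _).le
  have hC_pos : 0 < C := by
    have h2 := pi_pos
    rw [hC]; linarith
  refine ⟨C, hC_pos, ?_, ?_⟩
  · -- case r ≥ 1
    intro r hr
    have hr0 : (0 : ℝ) < r := lt_of_lt_of_le one_pos hr
    set f : ℝ → ℝ := fun θ => (r ^ 4 * Real.sin (2 * θ) ^ 2 + r ^ 2) ^ α with hf
    have hf_cont : Continuous f := by
      apply Continuous.rpow_const (by continuity)
      intro x; left; positivity
    -- symmetry: integral over [0,π/2] is twice integral over [0,π/4]
    have hsym : (∫ θ in (0:ℝ)..(π/2), f θ) = 2 * ∫ θ in (0:ℝ)..(π/4), f θ := by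
      have h1 : (∫ θ in (0:ℝ)..(π/4), f θ) + (∫ θ in (π/4:ℝ)..(π/2), f θ)
          = ∫ θ in (0:ℝ)..(π/2), f θ :=
        intervalIntegral.integral_add_adjacent_intervals
          (hf_cont.intervalIntegrable _ _) (hf_cont.intervalIntegrable _ _)
      have h2 : (∫ θ in (π/4:ℝ)..(π/2), f θ) = ∫ θ in (0:ℝ)..(π/4), f θ := by
        have := intervalIntegral.integral_comp_sub_left (a := 0) (b := π/4) f (π/2)
        have he : (π/2 - π/4 : ℝ) = π/4 := by ring
        have he2 : (π/2 - 0 : ℝ) = π/2 := by ring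
        rw [he, he2] at this
        rw [← this]
        apply intervalIntegral.integral_congr
        intro x _
        simp only [hf]
        have : Real.sin (2 * (π/2 - x)) = Real.sin (2 * x) := by
          have : 2 * (π/2 - x) = π - 2 * x := by ring
          rw [this, Real.sin_pi_sub]
        rw [this]
      linarith
    -- bound the integral over [0, π/4]
    have hbound : (∫ θ in (0:ℝ)..(π/4), f θ) ≤ D * J * r ^ (4 * α) := by
      have hmono : (∫ θ in (0:ℝ)..(π/4), f θ)
          ≤ ∫ θ in (0:ℝ)..(π/4), (r ^ (4*α) * D) * θ ^ (2*α) := by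
        apply intervalIntegral.integral_mono_ae_restrict (by positivity)
          (hf_cont.intervalIntegrable _ _)
        · exact (intervalIntegral.intervalIntegrable_rpow' h2α).const_mul _
        · have h0 : ∀ᵐ θ : ℝ ∂(MeasureTheory.volume.restrict (Set.Icc (0:ℝ) (π/4))),
              θ ≠ 0 := by
            apply MeasureTheory.ae_restrict_of_ae
            rw [MeasureTheory.ae_iff]
            have : {x : ℝ | ¬ x ≠ 0} = {0} := by ext x; simp
            rw [this]; exact Real.volume_singleton
          filter_upwards [h0, MeasureTheory.ae_restrict_mem measurableSet_Icc]
            with θ hθ0 hθmem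
          obtain ⟨hθl, hθu⟩ := hθmem
          have hθpos : 0 < θ := lt_of_le_of_ne hθl (Ne.symm hθ0)
          -- sin(2θ) ≥ 4θ/π
          have hsin : 4 / π * θ ≤ Real.sin (2 * θ) := by
            have := Real.mul_le_sin (x := 2 * θ) (by linarith) (by linarith)
            calc 4 / π * θ = 2 / π * (2 * θ) := by ring
              _ ≤ Real.sin (2 * θ) := this
          have hsin_sq : (4 / π * θ) ^ 2 ≤ Real.sin (2 * θ) ^ 2 := by
            apply pow_le_pow_left₀ (by positivity) hsin
          have hbase : r ^ 4 * ((4 / π * θ) ^ 2) ≤ r ^ 4 * Real.sin (2*θ) ^ 2 + r ^ 2 := by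
            have h1 : r ^ 4 * ((4 / π * θ) ^ 2) ≤ r ^ 4 * Real.sin (2*θ) ^ 2 := by
              apply mul_le_mul_of_nonneg_left hsin_sq (by positivity)
            nlinarith [sq_nonneg r]
          have hbasepos : (0:ℝ) < r ^ 4 * ((4 / π * θ) ^ 2) := by positivity
          calc f θ ≤ (r ^ 4 * ((4 / π * θ) ^ 2)) ^ α :=
                rpow_le_rpow_of_nonpos hbasepos hbase hα_neg.le
            _ = (r ^ 4) ^ α * ((4/π)^(2:ℕ)) ^ α * (θ^(2:ℕ)) ^ α := by
                rw [mul_pow, ← mul_assoc, mul_rpow (by positivity) (by positivity),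
                  mul_rpow (by positivity) (by positivity)]
            _ = r ^ (4*α) * D * θ ^ (2*α) := by
                rw [hD, ← Real.rpow_natCast r 4, ← Real.rpow_natCast θ 2,
                  ← Real.rpow_mul hr0.le, ← Real.rpow_mul hθpos.le]
                norm_num
      calc (∫ θ in (0:ℝ)..(π/4), f θ)
          ≤ ∫ θ in (0:ℝ)..(π/4), (r ^ (4*α) * D) * θ ^ (2*α) := hmono
        _ = (r ^ (4*α) * D) * J := by
            rw [intervalIntegral.integral_const_mul]
        _ = D * J * r ^ (4*α) := by ring
    -- conclude
    have hr4α : r ^ (4*α) ≤ r ^ (-1 : ℝ) := rpow_le_rpow_of_exponent_le hr h4α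
    have hfinal : 2 * (D * J * r ^ (4*α)) ≤ C * r ^ (-3/2 + 6/q : ℝ) * (1+r) ^ β := by
      have h1r : (1 + r) ^ β ≥ (2*r) ^ β := by
        apply rpow_le_rpow_of_nonpos (by positivity) (by linarith) hβ_neg
      have h2r : (2*r : ℝ) ^ β = 2 ^ β * r ^ β := mul_rpow (by norm_num) hr0.le
      have hexp : (-3/2 + 6/q : ℝ) = 2 * α := by simp only [hα]; ring
      rw [hexp]
      have key : C * r ^ (2*α) * (1+r) ^ β ≥ C * r ^ (2*α) * (2 ^ β * r ^ β) := by
        apply mul_le_mul_of_nonneg_left _ (mul_nonneg hC_pos.le (by positivity))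
        rw [← h2r]; exact h1r
      have heq : C * r ^ (2*α) * (2 ^ β * r ^ β)
          = C * 2 ^ β * r ^ (-1 : ℝ) := by
        have hrr : r ^ (2*α) * r ^ β = r ^ (-1 : ℝ) := by
          rw [← Real.rpow_add hr0, hβ_eq]; congr 1; ring
        calc C * r ^ (2*α) * (2 ^ β * r ^ β) = C * 2 ^ β * (r ^ (2*α) * r ^ β) := by ring
          _ = C * 2 ^ β * r ^ (-1 : ℝ) := by rw [hrr]
      have hstep : 2 * (D * J * r ^ (4*α)) ≤ C * 2 ^ β * r ^ (-1 : ℝ) := by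
        have hCge : 2 * D * J ≤ C * 2 ^ β := by
          have h2β : (2:ℝ) ^ (-β) * 2 ^ β = 1 := by
            rw [← Real.rpow_add (by norm_num)]; norm_num
          have hC2 : C * 2 ^ β ≥ (2 * D * J * 2 ^ (-β)) * 2 ^ β := by
            have hle : 2 * D * J * 2 ^ (-β) ≤ C := by
              rw [hC]; have := pi_pos; linarith
            exact mul_le_mul_of_nonneg_right hle (rpow_pos_of_pos two_pos _).le
          calc 2 * D * J = 2 * D * J * (2 ^ (-β) * 2 ^ β) := by rw [h2β]; ring
            _ = (2 * D * J * 2 ^ (-β)) * 2 ^ β := by ring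
            _ ≤ C * 2 ^ β := hC2
        calc 2 * (D * J * r ^ (4*α)) = (2 * D * J) * r ^ (4*α) := by ring
          _ ≤ (2 * D * J) * r ^ (-1:ℝ) := by
              exact mul_le_mul_of_nonneg_left hr4α
                (mul_nonneg (by positivity) hJ_nonneg)
          _ ≤ (C * 2 ^ β) * r ^ (-1:ℝ) := by
              apply mul_le_mul_of_nonneg_right hCge (by positivity)
      calc 2 * (D * J * r ^ (4*α)) ≤ C * 2 ^ β * r ^ (-1:ℝ) := hstep
        _ = C * r ^ (2*α) * (2 ^ β * r ^ β) := heq.symm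
        _ ≤ C * r ^ (2*α) * (1+r) ^ β := key
    calc (∫ θ in (0:ℝ)..(π/2), f θ) = 2 * ∫ θ in (0:ℝ)..(π/4), f θ := hsym
      _ ≤ 2 * (D * J * r ^ (4*α)) := by linarith [hbound]
      _ ≤ C * r ^ (-3/2 + 6/q : ℝ) * (1+r) ^ β := hfinal
  · -- case 0 < r ≤ 1
    intro r hr0 hr1
    set f : ℝ → ℝ := fun θ => (r ^ 4 * Real.sin (2 * θ) ^ 2 + r ^ 2) ^ α with hf
    have hf_cont : Continuous f := by
      apply Continuous.rpow_const (by continuity)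
      intro x; left; positivity
    have hexp : (-3/2 + 6/q : ℝ) = 2 * α := by simp only [hα]; ring
    have hpt : ∀ θ ∈ Set.Icc (0:ℝ) (π/2), f θ ≤ r ^ (2*α) := by
      intro θ _
      have hbase : r ^ 2 ≤ r ^ 4 * Real.sin (2*θ)^2 + r ^ 2 :=
        le_add_of_nonneg_left (by positivity)
      calc f θ ≤ (r ^ 2) ^ α := rpow_le_rpow_of_nonpos (by positivity) hbase hα_neg.le
        _ = r ^ (2*α) := by
            rw [← Real.rpow_natCast r 2, ← Real.rpow_mul hr0.le]; norm_num
    have : (∫ θ in (0:ℝ)..(π/2), f θ) ≤ ∫ _ in (0:ℝ)..(π/2), r ^ (2*α) := by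
      apply intervalIntegral.integral_mono_on (by positivity)
        (hf_cont.intervalIntegrable _ _) intervalIntegrable_const hpt
    rw [hexp]
    calc (∫ θ in (0:ℝ)..(π/2), f θ) ≤ ∫ _ in (0:ℝ)..(π/2), r ^ (2*α) := this
      _ = (π/2) * r ^ (2*α) := by
          rw [intervalIntegral.integral_const, smul_eq_mul]; ring_nf
      _ ≤ C * r ^ (2*α) := by
          apply mul_le_mul_of_nonneg_right _ (by positivity)
          rw [hC]; have : (0:ℝ) ≤ 2 * D * J * (2 : ℝ) ^ (-β) := by positivity
          linarith
end

section
/- Compute the Gaussian-modulated oscillatory integral: for s, τ > 0, R > 0, and x, y, z ∈ ℝ³, the kernel K(τ,z;s,y;x) = ∫_{ℝ³} (4πiτ)^{-3/2}(4πis)^{-3/2}(πR²)^{-3/2} exp{ i|z−x′|²/(4τ) − |x′−x|²/R² + i|x′−y|²/(4s) } dx′ satisfies |K| = (2π)^{-3} [16s²τ² + R⁴(s+τ)²]^{-3/4} exp{ − R²(s+τ)² |x − x*|² / (16s²τ² + R⁴(s+τ)²) }, where x* = (sz + τy)/(s+τ). -/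
/-!
By the parallel-axis identity
`s ‖v - z‖² + τ ‖v - y‖² = (s + τ) ‖v - x*‖² + sτ/(s + τ) ‖z - y‖²`, the two Schrödinger phases
merge into one chirp `i (s + τ)/(4sτ) ‖v - x*‖²` times a constant phase, so the integrand is the
Gaussian `exp(-‖v - x‖²/R²)` against a chirp centred at `x*`. Translating by `x*` and completing
the square reduces the integral to a complex Gaussian with width `b = 1/R² - i (s + τ)/(4sτ)`,
whose modulus is read off from `|b|` and `Re (1/b)`.
-/

open Real MeasureTheory

open scoped RealInnerProductSpace

section CompletingTheSquare

variable {E : Type*} [NormedAddCommGroup E] [InnerProductSpace ℝ E]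

theorem weighted_norm_sub_sq_add {α β : ℝ} (h : α + β ≠ 0) (v a b : E) :
    α * ‖v - a‖ ^ 2 + β * ‖v - b‖ ^ 2 =
      (α + β) * ‖v - (α + β)⁻¹ • (α • a + β • b)‖ ^ 2 + α * β / (α + β) * ‖a - b‖ ^ 2 := by
  simp only [← real_inner_self_eq_norm_sq, inner_sub_left, inner_sub_right, inner_smul_left,
    inner_smul_right, inner_add_left, inner_add_right, real_inner_comm a, real_inner_comm b v,
    RCLike.conj_to_real]
  field_simp
  ring

open Complex in
theorem schrodinger_phase_eq {s τ : ℝ} (hs : s ≠ 0) (hτ : τ ≠ 0) (hsτ : s + τ ≠ 0) (R : ℝ)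
    (v x y z : E) :
    I * ((‖z - v‖ : ℝ) ^ 2 : ℂ) / (4 * (τ : ℂ)) - ((‖v - x‖ : ℝ) ^ 2 : ℂ) / (R : ℂ) ^ 2 +
        I * ((‖v - y‖ : ℝ) ^ 2 : ℂ) / (4 * (s : ℂ)) =
      -(((R ^ 2)⁻¹ : ℝ) : ℂ) * ‖v - x‖ ^ 2 +
          (((s + τ) / (4 * s * τ) : ℝ) : ℂ) * I * ‖v - (s + τ)⁻¹ • (s • z + τ • y)‖ ^ 2 +
        ((‖z - y‖ ^ 2 / (4 * (s + τ)) : ℝ) : ℂ) * I := by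
  have h := congrArg (fun r : ℝ => (r : ℂ)) (weighted_norm_sub_sq_add hsτ v z y)
  have hs' : (s : ℂ) ≠ 0 := ofReal_ne_zero.mpr hs
  have hτ' : (τ : ℂ) ≠ 0 := ofReal_ne_zero.mpr hτ
  have hsτ' : (s : ℂ) + τ ≠ 0 := by exact_mod_cast hsτ
  push_cast at h ⊢
  rw [norm_sub_rev z v]
  linear_combination (norm := (field_simp; ring)) (I / (4 * s * τ)) * h

end CompletingTheSquare

section ChirpedGaussian

open Complex

theorem norm_sub_mul_I (a m : ℝ) : ‖(a - m * I : ℂ)‖ = √(a ^ 2 + m ^ 2) := by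
  simpa [sub_eq_add_neg] using norm_add_mul_I a (-m)

theorem re_neg_mul_add_sq_div_sub_mul_I {a : ℝ} (ha : 0 < a) (m r : ℝ) :
    (-a * r + a ^ 2 * r / (a - m * I)).re = -(a * m ^ 2 * r / (a ^ 2 + m ^ 2)) := by
  simp only [neg_mul, sq, add_re, neg_re, mul_re, ofReal_re, ofReal_im, mul_zero, sub_zero, div_re,
    mul_im, zero_mul, add_zero, sub_re, I_re, I_im, mul_one, sub_self, normSq_apply, sub_im,
    zero_sub, mul_neg, neg_neg, neg_zero, zero_div]
  field_simp
  ring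

variable {V : Type*} [NormedAddCommGroup V] [InnerProductSpace ℝ V] [FiniteDimensional ℝ V]
  [MeasurableSpace V] [BorelSpace V]

theorem integral_cexp_neg_mul_norm_sub_sq_add_mul_I {a : ℝ} (ha : 0 < a) (m : ℝ) (w x₀ : V) :
    ∫ v : V, cexp (-a * ‖v - w‖ ^ 2 + m * I * ‖v - x₀‖ ^ 2) =
      (π / (a - m * I)) ^ (Module.finrank ℝ V / 2 : ℂ) *
        cexp (-a * ‖w - x₀‖ ^ 2 + a ^ 2 * ‖w - x₀‖ ^ 2 / (a - m * I)) := by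
  have hb : 0 < (a - m * I : ℂ).re := by simpa using ha
  have hexp (u : V) : -a * ‖u + x₀ - w‖ ^ 2 + m * I * ‖u + x₀ - x₀‖ ^ 2 =
      -(a - m * I) * ‖u‖ ^ 2 + (2 * a : ℂ) * ⟪w - x₀, u⟫ + -a * ‖w - x₀‖ ^ 2 := by
    rw [show u + x₀ - w = u - (w - x₀) by abel, add_sub_cancel_right, ← ofReal_pow,
      norm_sub_sq_real, real_inner_comm]
    push_cast
    ring
  calc ∫ v : V, cexp (-a * ‖v - w‖ ^ 2 + m * I * ‖v - x₀‖ ^ 2)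
      = ∫ u : V, cexp (-(a - m * I) * ‖u‖ ^ 2 + (2 * a : ℂ) * ⟪w - x₀, u⟫) *
          cexp (-a * ‖w - x₀‖ ^ 2) := by
        rw [← integral_add_right_eq_self _ x₀]
        simp only [hexp, Complex.exp_add]
    _ = _ := by
        rw [integral_mul_const, GaussianFourier.integral_cexp_neg_mul_sq_norm_add hb, mul_assoc,
          ← Complex.exp_add]
        congr 2
        field_simp
        ring

theorem norm_integral_cexp_neg_mul_norm_sub_sq_add_mul_I {a : ℝ} (ha : 0 < a) (m : ℝ)
    (w x₀ : V) :
    ‖∫ v : V, cexp (-a * ‖v - w‖ ^ 2 + m * I * ‖v - x₀‖ ^ 2)‖ =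
      (π / √(a ^ 2 + m ^ 2)) ^ (Module.finrank ℝ V / 2 : ℝ) *
        Real.exp (-(a * m ^ 2 * ‖w - x₀‖ ^ 2 / (a ^ 2 + m ^ 2))) := by
  have hexponent : (Module.finrank ℝ V / 2 : ℂ) = ((Module.finrank ℝ V / 2 : ℝ) : ℂ) := by
    push_cast
    rfl
  rw [integral_cexp_neg_mul_norm_sub_sq_add_mul_I ha, norm_mul, Complex.norm_exp, ← ofReal_pow,
    re_neg_mul_add_sq_div_sub_mul_I ha, hexponent, norm_cpow_real, norm_div, norm_sub_mul_I,
    norm_real, Real.norm_of_nonneg pi_pos.le]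

end ChirpedGaussian

theorem schrodinger_gaussian_prefactor_eq {s τ R : ℝ} (hs : 0 < s) (hτ : 0 < τ) (hR : 0 < R) :
    (4 * π * τ) ^ (-(3 : ℝ) / 2) * (4 * π * s) ^ (-(3 : ℝ) / 2) * (π * R ^ 2) ^ (-(3 : ℝ) / 2) *
        (π / √(((R ^ 2)⁻¹) ^ 2 + ((s + τ) / (4 * s * τ)) ^ 2)) ^ ((3 : ℝ) / 2) =
      (2 * π) ^ (-(3 : ℝ)) * (16 * s ^ 2 * τ ^ 2 + R ^ 4 * (s + τ) ^ 2) ^ (-(3 : ℝ) / 4) := by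
  set D := 16 * s ^ 2 * τ ^ 2 + R ^ 4 * (s + τ) ^ 2
  have hD : 0 < D := by positivity
  have hnorm : √(((R ^ 2)⁻¹) ^ 2 + ((s + τ) / (4 * s * τ)) ^ 2) = √D / (4 * s * τ * R ^ 2) := by
    rw [eq_div_iff (by positivity), ← sqrt_sq (by positivity : 0 ≤ 4 * s * τ * R ^ 2),
      ← sqrt_mul (by positivity)]
    congr 1
    field_simp
    ring
  have hflip : (π / (√D / (4 * s * τ * R ^ 2))) ^ ((3 : ℝ) / 2) =
      (√D / (4 * s * τ * R ^ 2) / π) ^ (-(3 : ℝ) / 2) := by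
    rw [← inv_div, inv_rpow (by positivity), ← rpow_neg (by positivity), neg_div]
  have hprod : 4 * π * τ * (4 * π * s) * (π * R ^ 2) * (√D / (4 * s * τ * R ^ 2) / π) =
      (2 * π) ^ 2 * √D := by
    field_simp
    ring
  rw [hnorm, hflip, ← mul_rpow (by positivity) (by positivity),
    ← mul_rpow (by positivity) (by positivity), ← mul_rpow (by positivity) (by positivity), hprod,
    mul_rpow (by positivity) (by positivity), sqrt_eq_rpow, ← rpow_natCast,
    ← rpow_mul (by positivity), ← rpow_mul hD.le]
  norm_num

/-- Explicit evaluation of the Gaussian-modulated oscillatory integral appearing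
in the double Duhamel estimate: the modulus of
`∫ (4πiτ)^{-3/2}(4πis)^{-3/2}(πR²)^{-3/2} exp(i|z−x′|²/4τ − |x′−x|²/R² + i|x′−y|²/4s) dx′`
equals `(2π)^{-3}[16s²τ²+R⁴(s+τ)²]^{-3/4} exp(−R²(s+τ)²|x−x*|²/(16s²τ²+R⁴(s+τ)²))`
with `x* = (sz+τy)/(s+τ)`. -/
theorem stmt13 (s τ R : ℝ) (hs : 0 < s) (hτ : 0 < τ) (hR : 0 < R)
    (x y z : EuclideanSpace ℝ (Fin 3)) :
    ‖∫ x' : EuclideanSpace ℝ (Fin 3),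
        (4 * (π : ℂ) * Complex.I * (τ : ℂ)) ^ (-(3 : ℂ) / 2) *
          (4 * (π : ℂ) * Complex.I * (s : ℂ)) ^ (-(3 : ℂ) / 2) *
          ((π : ℂ) * (R : ℂ) ^ 2) ^ (-(3 : ℂ) / 2) *
          Complex.exp
            (Complex.I * ((‖z - x'‖ : ℝ) ^ 2 : ℂ) / (4 * (τ : ℂ)) -
              ((‖x' - x‖ : ℝ) ^ 2 : ℂ) / (R : ℂ) ^ 2 +
              Complex.I * ((‖x' - y‖ : ℝ) ^ 2 : ℂ) / (4 * (s : ℂ)))‖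
      = (2 * π) ^ (-(3 : ℝ)) *
          (16 * s ^ 2 * τ ^ 2 + R ^ 4 * (s + τ) ^ 2) ^ (-(3 : ℝ) / 4) *
          Real.exp
            (-(R ^ 2 * (s + τ) ^ 2 * ‖x - (s + τ)⁻¹ • (s • z + τ • y)‖ ^ 2) /
              (16 * s ^ 2 * τ ^ 2 + R ^ 4 * (s + τ) ^ 2)) := by
  have hnorm_cpow (w : ℂ) : ‖w ^ (-(3 : ℂ) / 2)‖ = ‖w‖ ^ (-(3 : ℝ) / 2) := by
    rw [← Complex.norm_cpow_real]
    push_cast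
    rfl
  simp only [schrodinger_phase_eq hs.ne' hτ.ne' (by positivity : s + τ ≠ 0),
    Complex.exp_add (_ + _)]
  rw [integral_const_mul, integral_mul_const]
  simp only [norm_mul, hnorm_cpow, Complex.norm_exp_ofReal_mul_I, mul_one,
    norm_integral_cexp_neg_mul_norm_sub_sq_add_mul_I (by positivity : 0 < (R ^ 2)⁻¹),
    finrank_euclideanSpace_fin]
  simp only [Complex.norm_real, Complex.norm_I, Complex.norm_ofNat, norm_pow, mul_one,
    Real.norm_of_nonneg pi_pos.le, Real.norm_of_nonneg hs.le, Real.norm_of_nonneg hτ.le,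
    Real.norm_of_nonneg hR.le, Nat.cast_ofNat]
  rw [← mul_assoc, schrodinger_gaussian_prefactor_eq hs hτ hR]
  congr 2
  field_simp
  ring
end

section
/- Suppose A, Ã : 2^ℤ → [0,∞) satisfy: (i) A(N) + Ã(N) ≤ C₁ N^{3/2} K^{1/2} for all N ≥ N₀ (for some fixed N₀ ∈ 2^ℤ, C₁ ≥ 1, K > 0); (ii) the recurrence A(N) ≤ C₂(1 + c^{-3/2} N^{3/2} K^{1/2}) + η² Ã(2N) and Ã(N) ≤ C₂(1 + c^{-3/2} N^{3/2} K^{1/2}) + η A(N) + η² Ã(2N) for all N ∈ 2^ℤ, with constants C₂ ≥ 1, c > 0; (iii) A(N), Ã(N) < ∞ for all N. Then if η > 0 is sufficiently small (depending only on C₂), there is a constant C (depending on C₁, C₂, c, N₀) such that A(N) + Ã(N) ≤ C(1 + N^{3/2} K^{1/2}) for all N ∈ 2^ℤ. -/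
/-!
Measure everything in units of the weight `g(N) = 1 + N^{3/2} K^{1/2}`, which grows by at most the
factor `2^{3/2}` from `N` to `2N`. If `Ã(2N) ≤ M g(2N)`, the recurrence gives
`A(N) ≤ (D + η² 2^{3/2} M) g(N)` and `Ã(N) ≤ (2D + 2 η² 2^{3/2} M) g(N)`, where `D` bounds the source
terms; once `η² 2^{3/2} ≤ 1/4` and `M ≥ 4D` this is again `Ã(N) ≤ M g(N)`. Taking `M` also above the
high-frequency constant `C₁`, downward induction from `N₀` bounds `Ã`, and then `A`, at every frequency.
-/

open Real

section Recurrence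

variable {g A A' : ℤ → ℝ} {D L M η : ℝ} {N₀ : ℤ}

theorem sq_mul_le_of_le_mul_succ {n : ℤ} (hg : 0 ≤ g n) (hgL : g (n + 1) ≤ L * g n)
    (hM : 0 ≤ M) (hηL : η ^ 2 * L ≤ 1 / 4) (h : A' (n + 1) ≤ M * g (n + 1)) :
    η ^ 2 * A' (n + 1) ≤ M / 4 * g n :=
  calc η ^ 2 * A' (n + 1) ≤ η ^ 2 * (M * (L * g n)) := by gcongr; exact h.trans (by gcongr)
    _ = (η ^ 2 * L) * (M * g n) := by ring
    _ ≤ 1 / 4 * (M * g n) := by gcongr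
    _ = M / 4 * g n := by ring

variable (hg : ∀ n, 0 ≤ g n) (hgL : ∀ n, g (n + 1) ≤ L * g n) (hD : 0 ≤ D) (hDM : 4 * D ≤ M)
  (hηL : η ^ 2 * L ≤ 1 / 4) (hrec : ∀ n, A n ≤ D * g n + η ^ 2 * A' (n + 1))
  (hη : η ≤ 1) (hA : ∀ n, 0 ≤ A n) (hrec' : ∀ n, A' n ≤ D * g n + η * A n + η ^ 2 * A' (n + 1))
include hg hgL hD hDM hηL hrec

theorem le_mul_weight_of_succ {n : ℤ}
    (h : A' (n + 1) ≤ M * g (n + 1)) : A n ≤ (D + M / 4) * g n := by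
  have := sq_mul_le_of_le_mul_succ (hg n) (hgL n) (by linarith) hηL h
  linarith [hrec n]

include hη hA hrec'

theorem le_mul_weight'_of_succ {n : ℤ} (h : A' (n + 1) ≤ M * g (n + 1)) :
    A' n ≤ M * g n := by
  have hAn := le_mul_weight_of_succ hg hgL hD hDM hηL hrec h
  have hηA : η * A n ≤ A n := mul_le_of_le_one_left (hA n) hη
  have := sq_mul_le_of_le_mul_succ (hg n) (hgL n) (by linarith) hηL h
  linarith [hrec' n, mul_le_mul_of_nonneg_right hDM (hg n)]

theorem le_mul_weight'_of_recurrence (hbase : ∀ n, N₀ ≤ n → A' n ≤ M * g n) (n : ℤ) :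
    A' n ≤ M * g n := by
  rcases le_total N₀ n with hn | hn
  · exact hbase n hn
  · induction n, hn using Int.leInductionDown with
    | base => exact hbase N₀ le_rfl
    | pred m _ ih =>
      exact le_mul_weight'_of_succ hg hgL hD hDM hηL hrec hη hA hrec' (by simpa using ih)

theorem add_le_mul_weight_of_recurrence (hbase : ∀ n, N₀ ≤ n → A' n ≤ M * g n) (n : ℤ) :
    A n + A' n ≤ (D + M / 4 + M) * g n := by
  have hA' := le_mul_weight'_of_recurrence hg hgL hD hDM hηL hrec hη hA hrec' hbase
  have := le_mul_weight_of_succ hg hgL hD hDM hηL hrec (hA' (n + 1))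
  linarith [hA' n]

end Recurrence

noncomputable def dyadicWeight (s k : ℝ) (n : ℤ) : ℝ := 1 + ((2 : ℝ) ^ n) ^ s * k

theorem dyadicWeight_nonneg {s k : ℝ} (hk : 0 ≤ k) (n : ℤ) : 0 ≤ dyadicWeight s k n := by
  unfold dyadicWeight
  positivity

theorem dyadicWeight_succ_le {s : ℝ} (k : ℝ) (hs : 0 ≤ s) (n : ℤ) :
    dyadicWeight s k (n + 1) ≤ 2 ^ s * dyadicWeight s k n := by
  have hpow : ((2 : ℝ) ^ (n + 1)) ^ s = 2 ^ s * ((2 : ℝ) ^ n) ^ s := by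
    rw [zpow_add_one₀ two_ne_zero, mul_comm, Real.mul_rpow zero_le_two (by positivity)]
  have hone : 1 ≤ (2 : ℝ) ^ s := Real.one_le_rpow one_le_two hs
  unfold dyadicWeight
  rw [hpow]
  linarith

theorem mul_one_add_mul_le (C a : ℝ) {x : ℝ} (hx : 0 ≤ x) :
    C * (1 + a * x) ≤ |C| * (1 + |a|) * (1 + x) :=
  calc C * (1 + a * x) ≤ |C| * (1 + |a| * x) := by
        refine (le_abs_self _).trans ?_
        rw [abs_mul]
        gcongr
        exact (abs_add_le _ _).trans (by rw [abs_one, abs_mul, abs_of_nonneg hx])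
    _ ≤ |C| * (1 + |a|) * (1 + x) := by
        rw [mul_assoc]
        gcongr
        nlinarith [abs_nonneg a]

theorem two_rpow_three_halves_le_four : (2 : ℝ) ^ (3 / 2 : ℝ) ≤ 4 :=
  calc (2 : ℝ) ^ (3 / 2 : ℝ) ≤ 2 ^ (2 : ℝ) :=
        Real.rpow_le_rpow_of_exponent_le one_le_two (by norm_num)
    _ = 4 := by norm_num

theorem stmt17_general (C₂ : ℝ) :
    ∃ η₀ > 0, ∀ η : ℝ, 0 < η → η ≤ η₀ →
      ∀ (C₁ c K : ℝ) (N₀ : ℤ), 1 ≤ C₁ → 0 < c → 0 < K →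
        ∀ A A' : ℤ → ℝ, (∀ n, 0 ≤ A n) → (∀ n, 0 ≤ A' n) →
          (∀ n : ℤ, N₀ ≤ n →
            A n + A' n ≤ C₁ * ((2 : ℝ) ^ n) ^ (3 / 2 : ℝ) * K ^ (1 / 2 : ℝ)) →
          (∀ n : ℤ,
            A n ≤ C₂ * (1 + c ^ (-(3 : ℝ) / 2) * ((2 : ℝ) ^ n) ^ (3 / 2 : ℝ) *
              K ^ (1 / 2 : ℝ)) + η ^ 2 * A' (n + 1)) →
          (∀ n : ℤ,
            A' n ≤ C₂ * (1 + c ^ (-(3 : ℝ) / 2) * ((2 : ℝ) ^ n) ^ (3 / 2 : ℝ) *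
              K ^ (1 / 2 : ℝ)) + η * A n + η ^ 2 * A' (n + 1)) →
          ∃ C : ℝ, ∀ n : ℤ,
            A n + A' n ≤ C * (1 + ((2 : ℝ) ^ n) ^ (3 / 2 : ℝ) * K ^ (1 / 2 : ℝ)) := by
  refine ⟨1 / 4, by norm_num, fun η hη hη₀ C₁ c K N₀ hC₁ _ hK A A' hA _ hbase hrec hrec' => ?_⟩
  set g := dyadicWeight (3 / 2) (K ^ (1 / 2 : ℝ))
  set D := |C₂| * (1 + |c ^ (-(3 : ℝ) / 2)|)
  set M := max (4 * D) C₁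
  have hg : ∀ n, 0 ≤ g n := dyadicWeight_nonneg (by positivity)
  have hsource : ∀ n : ℤ, C₂ * (1 + c ^ (-(3 : ℝ) / 2) * ((2 : ℝ) ^ n) ^ (3 / 2 : ℝ) *
      K ^ (1 / 2 : ℝ)) ≤ D * g n := fun n => by
    rw [mul_assoc (c ^ _)]
    exact mul_one_add_mul_le _ _ (by positivity)
  have hηL : η ^ 2 * (2 : ℝ) ^ (3 / 2 : ℝ) ≤ 1 / 4 := by
    have : η ^ 2 ≤ 1 / 16 := by nlinarith
    nlinarith [two_rpow_three_halves_le_four]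
  have hbase' : ∀ n, N₀ ≤ n → A' n ≤ M * g n := fun n hn =>
    calc A' n ≤ A n + A' n := le_add_of_nonneg_left (hA n)
      _ ≤ C₁ * (((2 : ℝ) ^ n) ^ (3 / 2 : ℝ) * K ^ (1 / 2 : ℝ)) :=
        (hbase n hn).trans_eq (mul_assoc _ _ _)
      _ ≤ C₁ * g n := by gcongr; exact le_add_of_nonneg_left zero_le_one
      _ ≤ M * g n := by gcongr; exacts [hg n, le_max_right _ _]
  exact ⟨D + M / 4 + M, add_le_mul_weight_of_recurrence hg (dyadicWeight_succ_le _ (by norm_num))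
    (by positivity) (le_max_left _ _) hηL (fun n => (hrec n).trans (add_le_add_left (hsource n) _))
    (by linarith) hA (fun n => (hrec' n).trans (add_le_add_left (add_le_add_left (hsource n) _) _))
    hbase'⟩

/-- Abstract downward induction on dyadic frequencies (`N = 2^n`) used for the
long-time Strichartz estimate: a high-frequency base case plus a recurrence
with small coefficient `η` yields `A(N) + Ã(N) ≤ C(1 + N^{3/2}K^{1/2})` for all
`N ∈ 2^ℤ`, provided `η` is small enough depending only on `C₂`.
Here `A` plays the role of `A(2^n)` and `A'` that of `Ã(2^n)`. -/
theorem stmt17 (C₂ : ℝ) (hC₂ : 1 ≤ C₂) :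
    ∃ η₀ > 0, ∀ η : ℝ, 0 < η → η ≤ η₀ →
      ∀ (C₁ c K : ℝ) (N₀ : ℤ), 1 ≤ C₁ → 0 < c → 0 < K →
        ∀ A A' : ℤ → ℝ, (∀ n, 0 ≤ A n) → (∀ n, 0 ≤ A' n) →
          (∀ n : ℤ, N₀ ≤ n →
            A n + A' n ≤ C₁ * ((2 : ℝ) ^ n) ^ (3 / 2 : ℝ) * K ^ (1 / 2 : ℝ)) →
          (∀ n : ℤ,
            A n ≤ C₂ * (1 + c ^ (-(3 : ℝ) / 2) * ((2 : ℝ) ^ n) ^ (3 / 2 : ℝ) *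
              K ^ (1 / 2 : ℝ)) + η ^ 2 * A' (n + 1)) →
          (∀ n : ℤ,
            A' n ≤ C₂ * (1 + c ^ (-(3 : ℝ) / 2) * ((2 : ℝ) ^ n) ^ (3 / 2 : ℝ) *
              K ^ (1 / 2 : ℝ)) + η * A n + η ^ 2 * A' (n + 1)) →
          ∃ C : ℝ, ∀ n : ℤ,
            A n + A' n ≤ C * (1 + ((2 : ℝ) ^ n) ^ (3 / 2 : ℝ) * K ^ (1 / 2 : ℝ)) :=
  stmt17_general C₂
end
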